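/- arXiv:0808.2801 — 4 statements merged into one kernel-verified Lean document; each statement's English description precedes it below -/
import Mathlib

section
/- For any two Poisson distributions with parameters λ and λ₀ where λ = λ₀ + D, D > 0 and λ₀ > 0, the total variation distance between Poisson(λ) and Poisson(λ₀) is at most D·√(2/λ₀). -/
/-!
By Cauchy–Schwarz, `∑ |p - q| ≤ √(χ²(p ‖ q))` with `χ²(p ‖ q) = ∑ (p - q)² / q`, and for Poisson
laws the χ²-divergence is explicit: `∑ p² / q` is again an exponential series, which gives
`χ²(Poisson(λ₀ + D) ‖ Poisson(λ₀)) = e^t - 1` with `t = D² / λ₀`. For `t ≤ 1` we have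
`e^t - 1 ≤ 2t`, so the total variation is at most `√(2t) / 2`; for `t > 1` the claimed bound
`√(2t)` exceeds `1`, which bounds every total variation distance.
-/

/-- The Poisson pmf on ℕ with rate `r`: `Poisson(r)({k}) = e^{-r} r^k / k!`. -/
noncomputable def poissonPMF (r : ℝ) (k : ℕ) : ℝ :=
  Real.exp (-r) * r ^ k / (Nat.factorial k)

open Real

lemma hasSum_exp_mul_pow_div_factorial (a x : ℝ) :
    HasSum (fun n : ℕ => exp a * (x ^ n / n.factorial)) (exp (a + x)) := by
  rw [exp_add, exp_eq_exp_ℝ]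
  exact (NormedSpace.expSeries_div_hasSum_exp x).mul_left _

lemma exp_sub_one_le_two_mul {t : ℝ} (ht0 : 0 ≤ t) (ht1 : t ≤ 1) : exp t - 1 ≤ 2 * t := by
  have := abs_exp_sub_one_le (x := t) (by rwa [abs_of_nonneg ht0])
  rwa [abs_of_nonneg (by linarith [add_one_le_exp t]), abs_of_nonneg ht0] at this

lemma abs_le_sq_div_add {x w : ℝ} (hw : 0 < w) : |x| ≤ x ^ 2 / w + w := by
  have hamgm : 2 * |x| * w ≤ x ^ 2 + w ^ 2 := by
    nlinarith [sq_nonneg (|x| - w), sq_abs x, abs_nonneg x]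
  rw [div_add' _ _ _ hw.ne', le_div_iff₀ hw]
  nlinarith [abs_nonneg x]

lemma tsum_abs_le_sqrt_mul_sqrt {ι : Type*} {f w : ι → ℝ} {A B : ℝ} (hw : ∀ i, 0 < w i)
    (hA : HasSum (fun i => f i ^ 2 / w i) A) (hB : HasSum w B) :
    ∑' i, |f i| ≤ √A * √B := by
  have hf : Summable fun i => |f i| :=
    (hA.summable.add hB.summable).of_nonneg_of_le (fun i => abs_nonneg _)
      fun i => abs_le_sq_div_add (hw i)
  refine hf.tsum_le_of_sum_le fun s => ?_
  rw [← sqrt_mul (hA.nonneg fun i => div_nonneg (sq_nonneg _) (hw i).le)]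
  apply le_sqrt_of_sq_le
  have hs : (∑ i ∈ s, |f i|) ^ 2 ≤ (∑ i ∈ s, f i ^ 2 / w i) * ∑ i ∈ s, w i := by
    rcases s.eq_empty_or_nonempty with rfl | hne
    · simp
    have := Finset.sq_sum_div_le_sum_sq_div s (fun i => |f i|) fun i _ => hw i
    simp only [sq_abs] at this
    rwa [div_le_iff₀ (Finset.sum_pos (fun i _ => hw i) hne)] at this
  refine hs.trans (mul_le_mul ?_ ?_ ?_ ?_)
  · exact sum_le_hasSum s (fun i _ => div_nonneg (sq_nonneg _) (hw i).le) hA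
  · exact sum_le_hasSum s (fun i _ => (hw i).le) hB
  · exact Finset.sum_nonneg fun i _ => (hw i).le
  · exact hA.nonneg fun i => div_nonneg (sq_nonneg _) (hw i).le

lemma tsum_abs_sub_le {ι : Type*} {p q : ι → ℝ} {a b : ℝ} (hp0 : ∀ i, 0 ≤ p i)
    (hq0 : ∀ i, 0 ≤ q i) (hp : HasSum p a) (hq : HasSum q b) :
    ∑' i, |p i - q i| ≤ a + b := by
  have hle : ∀ i, |p i - q i| ≤ p i + q i := fun i =>
    (abs_sub _ _).trans (by rw [abs_of_nonneg (hp0 i), abs_of_nonneg (hq0 i)])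
  have hsum : Summable fun i => |p i - q i| :=
    (hp.summable.add hq.summable).of_nonneg_of_le (fun i => abs_nonneg _) hle
  exact hasSum_le hle hsum.hasSum (hp.add hq)

lemma poissonPMF_eq_exp_mul (r : ℝ) (k : ℕ) :
    poissonPMF r k = exp (-r) * (r ^ k / k.factorial) :=
  mul_div_assoc _ _ _

lemma poissonPMF_pos {r : ℝ} (hr : 0 < r) (k : ℕ) : 0 < poissonPMF r k := by
  rw [poissonPMF]
  positivity

lemma hasSum_poissonPMF (r : ℝ) : HasSum (poissonPMF r) 1 := by
  simpa [funext (poissonPMF_eq_exp_mul r)] using hasSum_exp_mul_pow_div_factorial (-r) r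

lemma poissonPMF_sq_div_poissonPMF {lam0 : ℝ} (lam : ℝ) (hlam0 : lam0 ≠ 0) (k : ℕ) :
    poissonPMF lam k ^ 2 / poissonPMF lam0 k
      = exp (lam0 - 2 * lam) * ((lam ^ 2 / lam0) ^ k / k.factorial) := by
  have hexp : exp (-lam) ^ 2 = exp (lam0 - 2 * lam) * exp (-lam0) := by
    rw [← exp_nat_mul, ← exp_add]; ring_nf
  simp only [poissonPMF, div_pow, mul_pow, hexp, ← pow_mul]
  field_simp
  ring

lemma hasSum_poissonPMF_sq_div_poissonPMF {lam0 : ℝ} (lam : ℝ) (hlam0 : lam0 ≠ 0) :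
    HasSum (fun k => poissonPMF lam k ^ 2 / poissonPMF lam0 k)
      (exp ((lam - lam0) ^ 2 / lam0)) := by
  convert hasSum_exp_mul_pow_div_factorial (lam0 - 2 * lam) (lam ^ 2 / lam0) using 1
  · exact funext (poissonPMF_sq_div_poissonPMF lam hlam0)
  · congr 1
    field_simp
    ring

lemma hasSum_chiSq_poissonPMF {lam0 : ℝ} (lam : ℝ) (hlam0 : lam0 ≠ 0) :
    HasSum (fun k => (poissonPMF lam k - poissonPMF lam0 k) ^ 2 / poissonPMF lam0 k)
      (exp ((lam - lam0) ^ 2 / lam0) - 1) := by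
  have hq : ∀ k, poissonPMF lam0 k ≠ 0 := fun k => by
    rw [poissonPMF]; positivity
  have hexpand : ∀ k, (poissonPMF lam k - poissonPMF lam0 k) ^ 2 / poissonPMF lam0 k
      = poissonPMF lam k ^ 2 / poissonPMF lam0 k - 2 * poissonPMF lam k
        + poissonPMF lam0 k := fun k => by
    field_simp [hq k]
    ring
  rw [funext hexpand, show exp ((lam - lam0) ^ 2 / lam0) - 1
    = exp ((lam - lam0) ^ 2 / lam0) - 2 * 1 + 1 by ring]
  exact ((hasSum_poissonPMF_sq_div_poissonPMF lam hlam0).sub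
    ((hasSum_poissonPMF lam).mul_left 2)).add (hasSum_poissonPMF lam0)

/-- If `λ = λ₀ + D` with `D > 0` and `λ₀ > 0`, then the total variation distance
between `Poisson(λ)` and `Poisson(λ₀)` is at most `D·√(2/λ₀)`. -/
theorem stmt_0 (lam lam0 D : ℝ) (hD : 0 < D) (hlam0 : 0 < lam0)
    (hlam : lam = lam0 + D) :
    (1 / 2) * ∑' k : ℕ, |poissonPMF lam k - poissonPMF lam0 k| ≤
      D * Real.sqrt (2 / lam0) := by
  set t := D ^ 2 / lam0 with ht
  have ht0 : 0 ≤ t := by positivity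
  have hrhs : D * √(2 / lam0) = √(2 * t) := by
    rw [ht, show 2 * (D ^ 2 / lam0) = D ^ 2 * (2 / lam0) by ring,
      sqrt_mul (by positivity), sqrt_sq hD.le]
  have hchi : HasSum (fun k => (poissonPMF lam k - poissonPMF lam0 k) ^ 2 / poissonPMF lam0 k)
      (exp t - 1) := by
    simpa [hlam] using hasSum_chiSq_poissonPMF lam hlam0.ne'
  have hchi_bound := tsum_abs_le_sqrt_mul_sqrt (poissonPMF_pos hlam0) hchi (hasSum_poissonPMF lam0)
  have hmass := tsum_abs_sub_le (fun k => (poissonPMF_pos (by linarith) k).le)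
    (fun k => (poissonPMF_pos hlam0 k).le) (hasSum_poissonPMF lam) (hasSum_poissonPMF lam0)
  rw [hrhs]
  rcases le_or_gt t 1 with ht1 | ht1
  · rw [sqrt_one, mul_one] at hchi_bound
    have := hchi_bound.trans (sqrt_le_sqrt (exp_sub_one_le_two_mul ht0 ht1))
    linarith [sqrt_nonneg (2 * t)]
  · have : 1 ≤ √(2 * t) := one_le_sqrt.2 (by linarith)
    linarith
end

section
/- Given real numbers q₁,…,qₙ ∈ [0,1] and an integer z > 0, there exist p₁,…,pₙ ∈ [0,1] such that each pᵢ is an integer multiple of 1/z, |pᵢ − qᵢ| ≤ 1/z for all i, pᵢ = 0 whenever qᵢ = 0, and |∑ᵢ pᵢ − ∑ᵢ qᵢ| ≤ 1/z. -/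
/-!
Scale by `z` and round the partial sums rather than the entries: with `S_k = z(q₁ + ⋯ + q_k)`,
take `z pₖ = ⌊S_k⌋ - ⌊S_{k-1}⌋`. Each increment is an integer within distance `1` of `z qₖ`,
it is nonnegative, and it vanishes when `qₖ = 0`; the increments telescope to `⌊S_n⌋`, which is
within `1` of `S_n = z ∑ qᵢ`.
-/

open Finset

lemma abs_floor_sub_floor_sub_lt_one (x y : ℝ) :
    |((⌊y⌋ - ⌊x⌋ : ℤ) : ℝ) - (y - x)| < 1 := by
  have hx := Int.floor_le x
  have hy := Int.floor_le y
  have hx' := Int.sub_one_lt_floor x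
  have hy' := Int.sub_one_lt_floor y
  rw [abs_lt]
  push_cast
  constructor <;> linarith

lemma abs_div_sub_le_one_div {m x z : ℝ} (hz : 0 < z) (h : |m - z * x| ≤ 1) :
    |m / z - x| ≤ 1 / z := by
  rw [show m / z - x = (m - z * x) / z by field_simp, abs_div, abs_of_pos hz]
  gcongr

noncomputable def cumFloorStep (a : ℕ → ℝ) (k : ℕ) : ℤ :=
  ⌊∑ j ∈ range (k + 1), a j⌋ - ⌊∑ j ∈ range k, a j⌋

section cumFloorStep

variable {a : ℕ → ℝ} {k : ℕ}

lemma abs_cumFloorStep_sub_lt_one (a : ℕ → ℝ) (k : ℕ) :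
    |(cumFloorStep a k : ℝ) - a k| < 1 := by
  simpa [cumFloorStep, sum_range_succ] using
    abs_floor_sub_floor_sub_lt_one (∑ j ∈ range k, a j) (∑ j ∈ range (k + 1), a j)

lemma cumFloorStep_nonneg (h : 0 ≤ a k) : 0 ≤ cumFloorStep a k := by
  rw [cumFloorStep, sub_nonneg, sum_range_succ]
  exact Int.floor_le_floor (le_add_of_nonneg_right h)

lemma cumFloorStep_le_of_le {m : ℤ} (h : a k ≤ m) : cumFloorStep a k ≤ m := by
  have hlt : (cumFloorStep a k : ℝ) < m + 1 := by
    linarith [(abs_lt.mp (abs_cumFloorStep_sub_lt_one a k)).2]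
  exact Int.lt_add_one_iff.mp (by exact_mod_cast hlt)

lemma cumFloorStep_eq_zero (h : a k = 0) : cumFloorStep a k = 0 :=
  le_antisymm (cumFloorStep_le_of_le (by simp [h])) (cumFloorStep_nonneg h.ge)

lemma sum_cumFloorStep (a : ℕ → ℝ) (n : ℕ) :
    ∑ k ∈ range n, cumFloorStep a k = ⌊∑ k ∈ range n, a k⌋ := by
  simpa only [cumFloorStep, sum_range_zero, Int.floor_zero, sub_zero] using
    sum_range_sub (fun k => ⌊∑ j ∈ range k, a j⌋) n

end cumFloorStep

/-- Discretization step of the Rounding procedure: round each probability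
`qᵢ ∈ [0,1]` to a multiple of `1/z` while approximately preserving the sum. -/
theorem stmt_6 (n z : ℕ) (hz : 0 < z) (q : Fin n → ℝ)
    (hq : ∀ i, q i ∈ Set.Icc (0 : ℝ) 1) :
    ∃ p : Fin n → ℝ,
      (∀ i, p i ∈ Set.Icc (0 : ℝ) 1) ∧
      (∀ i, ∃ m : ℕ, p i = (m : ℝ) / z) ∧
      (∀ i, |p i - q i| ≤ 1 / z) ∧
      (∀ i, q i = 0 → p i = 0) ∧
      |(∑ i, p i) - ∑ i, q i| ≤ 1 / z := by
  have hz' : (0 : ℝ) < z := by exact_mod_cast hz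
  set a : ℕ → ℝ := fun k => z * Function.extend Fin.val q 0 k
  have ha (i : Fin n) : a i = z * q i := by simp [a, Fin.val_injective.extend_apply]
  have ha_nonneg (i : Fin n) : 0 ≤ a i := ha i ▸ mul_nonneg hz'.le (hq i).1
  have hsum : ∑ k ∈ range n, a k = z * ∑ i, q i := by
    rw [← Fin.sum_univ_eq_sum_range, mul_sum]
    exact sum_congr rfl fun i _ => ha i
  refine ⟨fun i => cumFloorStep a i / z, fun i => ⟨?_, ?_⟩, fun i => ?_, fun i => ?_,
    fun i hi => ?_, ?_⟩
  · exact div_nonneg (by exact_mod_cast cumFloorStep_nonneg (ha_nonneg i)) hz'.le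
  · rw [div_le_one hz']
    have hle : a i ≤ (z : ℤ) := by
      simpa [ha i] using mul_le_of_le_one_right hz'.le (hq i).2
    exact_mod_cast cumFloorStep_le_of_le hle
  · refine ⟨(cumFloorStep a i).toNat, ?_⟩
    have h := Int.toNat_of_nonneg (cumFloorStep_nonneg (ha_nonneg i))
    rw [show ((cumFloorStep a i).toNat : ℝ) = cumFloorStep a i by exact_mod_cast h]
  · exact abs_div_sub_le_one_div hz' (ha i ▸ (abs_cumFloorStep_sub_lt_one a i).le)
  · simp [cumFloorStep_eq_zero (show a i = 0 by simp [ha i, hi])]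
  · rw [← sum_div, Fin.sum_univ_eq_sum_range (fun k => (cumFloorStep a k : ℝ)), ← Int.cast_sum,
      sum_cumFloorStep, hsum]
    refine abs_div_sub_le_one_div hz' ?_
    rw [abs_sub_comm, Int.self_sub_floor, abs_of_nonneg (Int.fract_nonneg _)]
    exact (Int.fract_lt_one _).le
end

section
/- Let (x₁,…,x_p) be a mixed Nash equilibrium of a p-player game with s strategies per player and payoffs in [0,1], and let (x̂₁,…,x̂_p) be mixed strategies such that for all i, j: |x̂ᵢ(j) − xᵢ(j)| ≤ ε/(2ps), and x̂ᵢ(j) = 0 whenever xᵢ(j) = 0. Then (x̂₁,…,x̂_p) is an ε-approximate Nash equilibrium. -/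
open Finset

/-- Expected utility of player `i` under a mixed strategy profile `x` in a
`p`-player game with `s` strategies per player. -/
noncomputable def expUtil (p s : ℕ) (u : Fin p → (Fin p → Fin s) → ℝ)
    (x : Fin p → Fin s → ℝ) (i : Fin p) : ℝ :=
  ∑ a : Fin p → Fin s, (∏ j, x j (a j)) * u i a

/-- The profile `x` with player `i` deviating to the pure strategy `j`. -/
noncomputable def deviate (p s : ℕ) (x : Fin p → Fin s → ℝ) (i : Fin p)
    (j : Fin s) : Fin p → Fin s → ℝ :=
  Function.update x i (fun t => if t = j then 1 else 0)

/-
With payoffs in `[0,1]`, expected utilities under two profiles differ by at most the `ℓ¹` distance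
of the two product distributions, which telescopes to `∑ᵢ ∑ⱼ |x̂ᵢ(j) − xᵢ(j)| ≤ ps · ε/(2ps) = ε/2`.
Deviating to a pure strategy replaces the same row of both profiles, so the same bound holds for
deviations, and `u(x̂ with j) ≤ u(x with j) + ε/2 ≤ u(x) + ε/2 ≤ u(x̂) + ε`.
-/

lemma sum_prod_eq_one_of_mem_stdSimplex {ι α : Type*} [Fintype ι] [DecidableEq ι] [Fintype α]
    {y : ι → α → ℝ} (hy : ∀ j, y j ∈ stdSimplex ℝ α) :
    ∑ a : ι → α, ∏ j, y j (a j) = 1 := by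
  rw [← Fintype.prod_sum]
  simp [(hy _).2]

lemma abs_mul_sub_mul_le {a b c d : ℝ} (hb : 0 ≤ b) (hc : 0 ≤ c) :
    |a * b - c * d| ≤ |a - c| * b + c * |b - d| :=
  calc |a * b - c * d| = |(a - c) * b + c * (b - d)| := by ring_nf
    _ ≤ |(a - c) * b| + |c * (b - d)| := abs_add_le _ _
    _ = |a - c| * b + c * |b - d| := by rw [abs_mul, abs_mul, abs_of_nonneg hb, abs_of_nonneg hc]

theorem sum_abs_prod_sub_prod_le {α : Type*} [Fintype α] {n : ℕ} {y x : Fin n → α → ℝ}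
    (hy : ∀ j, y j ∈ stdSimplex ℝ α) (hx : ∀ j, x j ∈ stdSimplex ℝ α) :
    ∑ a : Fin n → α, |∏ j, y j (a j) - ∏ j, x j (a j)| ≤ ∑ j, ∑ t, |y j t - x j t| := by
  induction n with
  | zero => simp
  | succ n ih =>
    have hsplit : ∑ a : Fin (n + 1) → α, |∏ j, y j (a j) - ∏ j, x j (a j)|
        = ∑ t, ∑ a : Fin n → α,
            |y 0 t * ∏ j, y j.succ (a j) - x 0 t * ∏ j, x j.succ (a j)| := by
      rw [← (Fin.consEquiv fun _ => α).sum_comp, Fintype.sum_prod_type]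
      simp [Fin.consEquiv, Fin.prod_univ_succ]
    calc _ = _ := hsplit
      _ ≤ ∑ t, ∑ a : Fin n → α, (|y 0 t - x 0 t| * ∏ j, y j.succ (a j)
            + x 0 t * |∏ j, y j.succ (a j) - ∏ j, x j.succ (a j)|) := by
          gcongr with t _ a _
          exact abs_mul_sub_mul_le (prod_nonneg fun j _ => (hy _).1 _) ((hx 0).1 t)
      _ = (∑ t, |y 0 t - x 0 t|) * (∑ a : Fin n → α, ∏ j, y j.succ (a j))
            + (∑ t, x 0 t) * ∑ a : Fin n → α, |∏ j, y j.succ (a j) - ∏ j, x j.succ (a j)| := by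
          simp only [sum_add_distrib, ← mul_sum, ← sum_mul]
      _ ≤ ∑ t, |y 0 t - x 0 t| + ∑ j : Fin n, ∑ t, |y j.succ t - x j.succ t| := by
          have hy_tail : ∑ a : Fin n → α, ∏ j, y j.succ (a j) = 1 :=
            sum_prod_eq_one_of_mem_stdSimplex fun j => hy j.succ
          rw [hy_tail, (hx 0).2, mul_one, one_mul]
          gcongr
          exact ih (fun j => hy j.succ) (fun j => hx j.succ)
      _ = ∑ j, ∑ t, |y j t - x j t| := (Fin.sum_univ_succ fun j => ∑ t, |y j t - x j t|).symm

section
variable {p s : ℕ}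

lemma abs_expUtil_sub_le {u : Fin p → (Fin p → Fin s) → ℝ} {i : Fin p}
    (hu : ∀ a, |u i a| ≤ 1) {y x : Fin p → Fin s → ℝ}
    (hy : ∀ k, y k ∈ stdSimplex ℝ (Fin s)) (hx : ∀ k, x k ∈ stdSimplex ℝ (Fin s)) :
    |expUtil p s u y i - expUtil p s u x i| ≤ ∑ k, ∑ t, |y k t - x k t| :=
  calc |expUtil p s u y i - expUtil p s u x i|
      = |∑ a : Fin p → Fin s, (∏ k, y k (a k) - ∏ k, x k (a k)) * u i a| := by
        rw [expUtil, expUtil, ← sum_sub_distrib]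
        simp_rw [sub_mul]
    _ ≤ ∑ a : Fin p → Fin s, |∏ k, y k (a k) - ∏ k, x k (a k)| := by
        refine (abs_sum_le_sum_abs _ _).trans (sum_le_sum fun a _ => ?_)
        rw [abs_mul]
        exact mul_le_of_le_one_right (abs_nonneg _) (hu a)
    _ ≤ ∑ k, ∑ t, |y k t - x k t| := sum_abs_prod_sub_prod_le hy hx

lemma deviate_mem_stdSimplex {x : Fin p → Fin s → ℝ} (hx : ∀ k, x k ∈ stdSimplex ℝ (Fin s))
    (i : Fin p) (j : Fin s) (k : Fin p) : deviate p s x i j k ∈ stdSimplex ℝ (Fin s) := by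
  rcases eq_or_ne k i with rfl | hk
  · convert single_mem_stdSimplex ℝ j
    ext t
    simp [deviate, Pi.single_apply]
  · simpa [deviate, hk] using hx k

lemma sum_abs_deviate_sub_deviate_le (y x : Fin p → Fin s → ℝ) (i : Fin p) (j : Fin s) :
    ∑ k, ∑ t, |deviate p s y i j k t - deviate p s x i j k t| ≤ ∑ k, ∑ t, |y k t - x k t| := by
  refine sum_le_sum fun k _ => sum_le_sum fun t _ => ?_
  rcases eq_or_ne k i with rfl | hk
  · simp [deviate]
  · simp [deviate, hk]

end

theorem stmt_8_general (p s : ℕ) (ε : ℝ)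
    (u : Fin p → (Fin p → Fin s) → ℝ)
    (hu : ∀ i a, u i a ∈ Set.Icc (0 : ℝ) 1)
    (x xh : Fin p → Fin s → ℝ)
    (hx : ∀ i j, 0 ≤ x i j) (hx1 : ∀ i, ∑ j, x i j = 1)
    (hxh : ∀ i j, 0 ≤ xh i j) (hxh1 : ∀ i, ∑ j, xh i j = 1)
    (hNash : ∀ i j, expUtil p s u (deviate p s x i j) i ≤ expUtil p s u x i)
    (hclose : ∀ i j, |xh i j - x i j| ≤ ε / (2 * p * s)) :
    ∀ i j, expUtil p s u (deviate p s xh i j) i ≤ expUtil p s u xh i + ε := by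
  intro i j
  have hx' : ∀ k, x k ∈ stdSimplex ℝ (Fin s) := fun k => ⟨hx k, hx1 k⟩
  have hxh' : ∀ k, xh k ∈ stdSimplex ℝ (Fin s) := fun k => ⟨hxh k, hxh1 k⟩
  have hu_i : ∀ a, |u i a| ≤ 1 := fun a => abs_le.2 ⟨by linarith [(hu i a).1], (hu i a).2⟩
  have hdist : ∑ k, ∑ t, |xh k t - x k t| ≤ ε / 2 :=
    calc ∑ k, ∑ t, |xh k t - x k t| ≤ ∑ _k : Fin p, ∑ _t : Fin s, ε / (2 * p * s) := by
          gcongr with k _ t _; exact hclose k t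
      _ = ε / 2 := by
          have hp := i.pos
          have hs := j.pos
          simp only [sum_const, card_univ, Fintype.card_fin, nsmul_eq_mul]
          field_simp
  have hdev := abs_expUtil_sub_le hu_i (deviate_mem_stdSimplex hxh' i j)
    (deviate_mem_stdSimplex hx' i j)
  have hprof := abs_expUtil_sub_le hu_i hxh' hx'
  linarith [abs_le.1 hdev, abs_le.1 hprof, hNash i j, sum_abs_deviate_sub_deviate_le xh x i j]

/-- Perturbation lemma: if `(x₁,…,x_p)` is a mixed Nash equilibrium of a
`p`-player game with `s` strategies and payoffs in `[0,1]`, and `(x̂₁,…,x̂_p)`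
satisfies `|x̂ᵢ(j) − xᵢ(j)| ≤ ε/(2ps)` with the same supports, then
`(x̂₁,…,x̂_p)` is an `ε`-approximate Nash equilibrium. -/
theorem stmt_8 (p s : ℕ) (hp : 0 < p) (hs : 0 < s) (ε : ℝ) (hε : 0 < ε)
    (u : Fin p → (Fin p → Fin s) → ℝ)
    (hu : ∀ i a, u i a ∈ Set.Icc (0 : ℝ) 1)
    (x xh : Fin p → Fin s → ℝ)
    (hx : ∀ i j, 0 ≤ x i j) (hx1 : ∀ i, ∑ j, x i j = 1)
    (hxh : ∀ i j, 0 ≤ xh i j) (hxh1 : ∀ i, ∑ j, xh i j = 1)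
    (hNash : ∀ i j, expUtil p s u (deviate p s x i j) i ≤ expUtil p s u x i)
    (hclose : ∀ i j, |xh i j - x i j| ≤ ε / (2 * p * s))
    (hsupp : ∀ i j, x i j = 0 → xh i j = 0) :
    ∀ i j, expUtil p s u (deviate p s xh i j) i ≤ expUtil p s u xh i + ε :=
  stmt_8_general p s ε u hu x xh hx hx1 hxh hxh1 hNash hclose
end

section
/- Let T(2) = 1 and, for n ≥ 3, T(n) = 2·T(2)·(n−1)·T(n−1) + ∑_{j=3}^{n−1} (j−1)·T(j)·max{T(n−j), T(n+1−j)} (with T(m) interpreted as 1 for m ≤ 2). Then T(k) ≤ k^{k²} for all k ≥ 2. -/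
/-- The recurrence bounding the number of tree topologies produced by the
Trickle-Down Process: `T(m) = 1` for `m ≤ 2` and, for `n ≥ 3`,
`T(n) = 2·T(2)·(n−1)·T(n−1) + ∑_{j=3}^{n−1} (j−1)·T(j)·max{T(n−j), T(n+1−j)}`. -/
def T : ℕ → ℕ
  | 0 => 1
  | 1 => 1
  | 2 => 1
  | (n + 3) =>
      2 * T 2 * (n + 2) * T (n + 2) +
        ∑ j ∈ (Finset.Icc 3 (n + 2)).attach,
          (j.1 - 1) * T j.1 * max (T (n + 3 - j.1)) (T (n + 4 - j.1))
  termination_by n => n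
  decreasing_by
  · simp
  · omega
  · have := Finset.mem_Icc.mp j.2; omega
  · have := Finset.mem_Icc.mp j.2; omega
  · have := Finset.mem_Icc.mp j.2; omega

/-!
Strong induction. For `k ≥ 3` each summand `(j - 1) T(j) max(T(k - j), T(k + 1 - j))` is at most
`k · k^{j²} · k^{(k + 1 - j)²} ≤ k^{k² - 2}`, since `j² + (k + 1 - j)² ≤ k² - 3` when `j ≥ 3` and
`k + 1 - j ≥ 2`; so the `k - 3` summands add up to at most `k^{k² - 1}`. The leading term
`2 (k - 1) T(k - 1) ≤ k² · k^{(k - 1)²}` is also at most `k^{k² - 1}`, and `2 k^{k² - 1} ≤ k^{k²}`.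
-/

open Finset

theorem T_of_three_le {k : ℕ} (hk : 3 ≤ k) :
    T k = 2 * (k - 1) * T (k - 1) +
      ∑ j ∈ Icc 3 (k - 1), (j - 1) * T j * max (T (k - j)) (T (k + 1 - j)) := by
  obtain ⟨n, rfl⟩ := Nat.exists_eq_add_of_le' hk
  rw [T, sum_attach (Icc 3 (n + 2))
    fun j => (j - 1) * T j * max (T (n + 3 - j)) (T (n + 4 - j))]
  simp [T]

theorem sq_add_sq_add_three_le {a b k : ℕ} (hab : a + b = k + 1) (ha : 3 ≤ a) (hb : 2 ≤ b) :
    a ^ 2 + b ^ 2 + 3 ≤ k ^ 2 := by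
  nlinarith

theorem T_le_pow_of_lt {k i e : ℕ} (ih : ∀ i < k, T i ≤ i ^ i ^ 2) (hi : i < k)
    (he : i ^ 2 ≤ e) : T i ≤ k ^ e :=
  (ih i hi).trans ((Nat.pow_le_pow_left hi.le _).trans (Nat.pow_le_pow_right (by omega) he))

theorem T_summand_le {k j : ℕ} (ih : ∀ i < k, T i ≤ i ^ i ^ 2) (hj : 3 ≤ j) (hjk : j < k) :
    (j - 1) * T j * max (T (k - j)) (T (k + 1 - j)) ≤ k ^ (k ^ 2 - 2) := by
  have hexp := sq_add_sq_add_three_le (a := j) (b := k + 1 - j) (k := k) (by omega) hj (by omega)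
  have hmax : max (T (k - j)) (T (k + 1 - j)) ≤ k ^ (k + 1 - j) ^ 2 :=
    max_le (T_le_pow_of_lt ih (by omega) (Nat.pow_le_pow_left (by omega) 2))
      (T_le_pow_of_lt ih (by omega) le_rfl)
  calc (j - 1) * T j * max (T (k - j)) (T (k + 1 - j))
      ≤ k * k ^ j ^ 2 * k ^ (k + 1 - j) ^ 2 :=
        Nat.mul_le_mul (Nat.mul_le_mul (by omega) (T_le_pow_of_lt ih hjk le_rfl)) hmax
    _ = k ^ (1 + j ^ 2 + (k + 1 - j) ^ 2) := by ring
    _ ≤ k ^ (k ^ 2 - 2) := Nat.pow_le_pow_right (by omega) (by omega)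

theorem T_le_pow_of_forall_lt {k : ℕ} (hk : 3 ≤ k) (ih : ∀ i < k, T i ≤ i ^ i ^ 2) :
    T k ≤ k ^ k ^ 2 := by
  have hk2 : 9 ≤ k ^ 2 := by nlinarith
  have hsq : (k - 1) ^ 2 + 3 ≤ k ^ 2 := by
    zify [show 1 ≤ k by omega]; nlinarith
  have hfirst : 2 * (k - 1) * T (k - 1) ≤ k ^ (k ^ 2 - 1) :=
    calc 2 * (k - 1) * T (k - 1) ≤ k ^ 2 * k ^ (k ^ 2 - 3) :=
          Nat.mul_le_mul (by nlinarith) (T_le_pow_of_lt ih (by omega) (by omega))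
      _ = k ^ (k ^ 2 - 1) := by rw [← pow_add]; congr 1; omega
  have hsum : ∑ j ∈ Icc 3 (k - 1), (j - 1) * T j * max (T (k - j)) (T (k + 1 - j)) ≤
      k ^ (k ^ 2 - 1) :=
    calc _ ≤ ∑ _j ∈ Icc 3 (k - 1), k ^ (k ^ 2 - 2) :=
          sum_le_sum fun j hj => T_summand_le ih (mem_Icc.1 hj).1 (by grind)
      _ ≤ k * k ^ (k ^ 2 - 2) := by
          rw [sum_const, Nat.card_Icc, smul_eq_mul]; exact Nat.mul_le_mul_right _ (by omega)
      _ = k ^ (k ^ 2 - 1) := by rw [← pow_succ']; congr 1; omega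
  rw [T_of_three_le hk]
  calc _ ≤ k ^ (k ^ 2 - 1) + k ^ (k ^ 2 - 1) := add_le_add hfirst hsum
    _ ≤ k * k ^ (k ^ 2 - 1) := by rw [← two_mul]; exact Nat.mul_le_mul_right _ (by omega)
    _ = k ^ k ^ 2 := by rw [← pow_succ']; congr 1; omega

theorem stmt_11_general (k : ℕ) : T k ≤ k ^ (k ^ 2) := by
  induction k using Nat.strong_induction_on with
  | _ k ih =>
    rcases lt_or_ge k 3 with hk | hk
    · interval_cases k <;> simp [T]
    · exact T_le_pow_of_forall_lt hk ih

/-- `T(k) ≤ k^{k²}` for all `k ≥ 2`. -/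
theorem stmt_11 (k : ℕ) (hk : 2 ≤ k) : T k ≤ k ^ (k ^ 2) :=
  stmt_11_general k
end
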